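/- arXiv:math/0104164 — 2 statements merged into one kernel-verified Lean document; each statement's English description precedes it below -/
import Mathlib

section
/- Any polynomial function p : ℝⁿ → ℝ that is symmetric under all permutations of its n arguments is a polynomial in the elementary symmetric polynomials (Newton's theorem on symmetric polynomials). -/
theorem symmetric_polynomial_in_esymm (n : ℕ) (p : MvPolynomial (Fin n) ℝ)
    (hp : ∀ σ : Equiv.Perm (Fin n), MvPolynomial.rename σ p = p) :
    p ∈ Algebra.adjoin ℝ
      (Set.range fun k : Fin n => MvPolynomial.esymm (Fin n) ℝ ((k : ℕ) + 1)) := by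
  obtain ⟨q, hq⟩ := MvPolynomial.esymmAlgHom_fin_surjective (R := ℝ) (m := n) le_rfl ⟨p, hp⟩
  have : p = MvPolynomial.aeval (fun i : Fin n ↦ MvPolynomial.esymm (Fin n) ℝ (i + 1)) q := by
    rw [← MvPolynomial.esymmAlgHom_apply, hq]
  rw [this, Algebra.adjoin_range_eq_range_aeval]
  exact ⟨q, rfl⟩
end

section
/- First derivative of the heat flow at t = 0: for smooth compactly supported φ, lim_{t→0⁺} (1/t)(⟨K_t, φ⟩ - φ(0)) = φ''(0), where ⟨K_t, φ⟩ = ∫ (4πt)^{-1/2} e^{-x²/4t} φ(x) dx. -/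
open MeasureTheory Real Filter Set


lemma odd_int : ∫ x : ℝ, x * Real.exp (-x^2) = 0 := by
  have h : ∫ x : ℝ, (-x) * Real.exp (-(-x)^2) = ∫ x : ℝ, x * Real.exp (-x^2) :=
    integral_neg_eq_self (fun y : ℝ => y * Real.exp (-y^2)) (volume : Measure ℝ)
  have h2 : ∫ x : ℝ, -x * Real.exp (-(-x)^2) = - ∫ x : ℝ, x * Real.exp (-x^2) := by
    rw [← integral_neg]
    congr 1; ext x; ring_nf
  linarith [h, h2]

lemma second_moment : ∫ x : ℝ, x^2 * Real.exp (-x^2) = Real.sqrt Real.pi / 2 := by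
  have hu : ∀ x : ℝ, HasDerivAt (fun y : ℝ => y) 1 x := fun x => hasDerivAt_id x
  have hv : ∀ x : ℝ, HasDerivAt (fun y : ℝ => -Real.exp (-y^2)/2) (x * Real.exp (-x^2)) x := by
    intro x
    have h1 : HasDerivAt (fun y : ℝ => -y^2) (-(2*x)) x := by
      simpa using ((hasDerivAt_pow 2 x).fun_neg)
    have h2 := (h1.exp).neg.div_const 2
    convert h2 using 1
    · rfl
    · rfl
    · rfl
    ring_nf
  have hint2 : Integrable fun x : ℝ => x^2 * Real.exp (-x^2) := by
    have := integrable_rpow_mul_exp_neg_mul_sq (b := 1) one_pos (s := 2) (by norm_num)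
    refine this.congr (Filter.Eventually.of_forall fun x => ?_)
    simp only [Real.rpow_natCast (n := 2)]
    norm_num
  have hintg : Integrable fun x : ℝ => Real.exp (-x^2) := by
    simpa using integrable_exp_neg_mul_sq (b := 1) one_pos
  have hint1 : Integrable ((fun x : ℝ => x) * fun x : ℝ => x * Real.exp (-x^2)) := by
    refine hint2.congr (Filter.Eventually.of_forall fun x => ?_)
    simp [Pi.mul_apply]; ring
  have hint3 : Integrable ((fun _ : ℝ => (1:ℝ)) * fun x : ℝ => -Real.exp (-x^2)/2) := by
    refine (hintg.const_mul (-1/2)).congr (Filter.Eventually.of_forall fun x => ?_)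
    simp [Pi.mul_apply]; ring
  have hint4 : Integrable ((fun x : ℝ => x) * fun x : ℝ => -Real.exp (-x^2)/2) := by
    have := integrable_mul_exp_neg_mul_sq (b := 1) one_pos
    refine (this.const_mul (-1/2)).congr (Filter.Eventually.of_forall fun x => ?_)
    simp [Pi.mul_apply]; ring
  have key := integral_mul_deriv_eq_deriv_mul_of_integrable (fun x _ => hu x) (fun x _ => hv x) hint1 hint3 hint4
  have hg : ∫ x : ℝ, Real.exp (-x^2) = Real.sqrt Real.pi := by
    simpa using integral_gaussian 1
  have e1 : ∫ x : ℝ, x * (x * Real.exp (-x^2)) = ∫ x : ℝ, x^2 * Real.exp (-x^2) := by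
    congr 1; ext x; ring
  have e2 : ∫ x : ℝ, (1:ℝ) * (-Real.exp (-x^2)/2) = -(Real.sqrt Real.pi)/2 := by
    have : ∫ x : ℝ, (1:ℝ) * (-Real.exp (-x^2)/2) = ∫ x : ℝ, (-1/2 : ℝ) * Real.exp (-x^2) := by
      congr 1; ext x; ring
    rw [this, MeasureTheory.integral_const_mul, hg]; ring
  rw [e1, e2] at key
  linarith [key]

lemma abs_le_abs_of_uIcc {y a : ℝ} (hy : y ∈ uIcc 0 a) : |y| ≤ |a| := by
  rcases mem_uIcc.1 hy with h | h
  · exact abs_le.2 ⟨(neg_nonpos_of_nonneg (abs_nonneg a)).trans h.1, h.2.trans (le_abs_self a)⟩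
  · exact abs_le.2 ⟨(neg_abs_le a).trans h.1, h.2.trans (abs_nonneg a)⟩


lemma taylor1 (f : ℝ → ℝ) (hdf : ∀ x : ℝ, HasDerivAt f (deriv f x) x)
    (hdf2 : ∀ x : ℝ, HasDerivAt (deriv f) (deriv (deriv f) x) x)
    {C : ℝ} (hC : ∀ x : ℝ, |deriv (deriv f) x| ≤ C) (a : ℝ) :
    |f a - f 0 - deriv f 0 * a| ≤ C * a ^ 2 := by
  have hC0 : 0 ≤ C := le_trans (abs_nonneg _) (hC 0)
  -- step A: Lipschitz bound on deriv f
  have stepA : ∀ y : ℝ, |deriv f y - deriv f 0| ≤ C * |y| := by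
    intro y
    have := convex_univ.norm_image_sub_le_of_norm_hasDerivWithin_le
      (f := deriv f) (f' := deriv (deriv f)) (s := (univ : Set ℝ))
      (fun x _ => (hdf2 x).hasDerivWithinAt) (fun x _ => hC x) (mem_univ 0) (mem_univ y)
    simpa using this
  -- step B
  set g : ℝ → ℝ := fun y => f y - f 0 - deriv f 0 * y with hg
  have hg' : ∀ y : ℝ, HasDerivAt g (deriv f y - deriv f 0) y := by
    intro y
    simpa using ((hdf y).sub_const (f 0)).fun_sub ((hasDerivAt_id y).const_mul (deriv f 0))
  have hmem0 : (0:ℝ) ∈ uIcc 0 a := left_mem_uIcc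
  have hmema : a ∈ uIcc 0 a := right_mem_uIcc
  have bound : ∀ y ∈ uIcc 0 a, ‖deriv f y - deriv f 0‖ ≤ C * |a| := by
    intro y hy
    have hya : |y| ≤ |a| := by
      rcases mem_uIcc.1 hy with h | h
      · exact abs_le.2 ⟨(neg_nonpos_of_nonneg (abs_nonneg a)).trans h.1, h.2.trans (le_abs_self a)⟩
      · exact abs_le.2 ⟨(neg_abs_le a).trans h.1, h.2.trans (abs_nonneg a)⟩
    calc ‖deriv f y - deriv f 0‖ ≤ C * |y| := stepA y
      _ ≤ C * |a| := by nlinarith [abs_nonneg y]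
  have := (convex_uIcc (0:ℝ) a).norm_image_sub_le_of_norm_hasDerivWithin_le
    (f := g) (f' := fun y => deriv f y - deriv f 0)
    (fun x hx => (hg' x).hasDerivWithinAt) bound hmem0 hmema
  have hga : g a - g 0 = f a - f 0 - deriv f 0 * a := by simp [hg]
  rw [hga] at this
  calc |f a - f 0 - deriv f 0 * a| ≤ C * |a| * ‖a - 0‖ := this
    _ = C * a^2 := by rw [Real.norm_eq_abs, sub_zero, mul_assoc, ← abs_mul, abs_mul_self]; ring

lemma taylor2 (f : ℝ → ℝ) (hdf : ∀ x : ℝ, HasDerivAt f (deriv f x) x)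
    (hdf2 : ∀ x : ℝ, HasDerivAt (deriv f) (deriv (deriv f) x) x)
    {ε : ℝ} (hε : 0 < ε) :
    ∃ δ > 0, ∀ a : ℝ, |a| ≤ δ →
      |f a - f 0 - deriv f 0 * a - deriv (deriv f) 0 * a ^ 2 / 2| ≤ ε * a ^ 2 := by
  set c1 := deriv f 0
  set c2 := deriv (deriv f) 0
  have hlo := (hasDerivAt_iff_isLittleO.1 (hdf2 0)).def hε
  rw [Metric.eventually_nhds_iff] at hlo
  obtain ⟨δ, hδ, hbound⟩ := hlo
  refine ⟨δ/2, by linarith, fun a ha => ?_⟩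
  have key : ∀ y : ℝ, |y| ≤ δ/2 → |deriv f y - deriv f 0 - c2 * y| ≤ ε * |y| := by
    intro y hy
    have := hbound (y := y) (by simpa [Real.dist_eq] using lt_of_le_of_lt hy (by linarith))
    simpa [Real.norm_eq_abs, sub_zero, smul_eq_mul, mul_comm] using this
  set g : ℝ → ℝ := fun y => f y - f 0 - c1 * y - c2 * y ^ 2 / 2 with hgdef
  have hg' : ∀ y : ℝ, HasDerivAt g (deriv f y - deriv f 0 - c2 * y) y := by
    intro y
    have h1 : HasDerivAt (fun y : ℝ => c2 * y ^ 2 / 2) (c2 * y) y := by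
      have := ((hasDerivAt_pow 2 y).const_mul (c2 / 2))
      convert this using 1
      · rfl
      · rfl
      · funext z; ring
      · push_cast; ring
    have := (((hdf y).sub_const (f 0)).sub ((hasDerivAt_id y).const_mul c1)).sub h1
    convert this using 1
    · rfl
    · rfl
    · rfl
    ring
  have bound : ∀ y ∈ uIcc 0 a, ‖deriv f y - deriv f 0 - c2 * y‖ ≤ ε * |a| := by
    intro y hy
    have hya := abs_le_abs_of_uIcc hy
    calc ‖deriv f y - deriv f 0 - c2 * y‖ ≤ ε * |y| := key y (hya.trans ha)
      _ ≤ ε * |a| := by nlinarith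
  have hmvt := (convex_uIcc (0:ℝ) a).norm_image_sub_le_of_norm_hasDerivWithin_le
    (f := g) (f' := fun y => deriv f y - deriv f 0 - c2 * y)
    (fun x _ => (hg' x).hasDerivWithinAt) bound left_mem_uIcc right_mem_uIcc
  have hga : g a - g 0 = f a - f 0 - c1 * a - c2 * a ^ 2 / 2 := by simp [hgdef]
  rw [hga] at hmvt
  calc |f a - f 0 - c1 * a - c2 * a ^ 2 / 2| ≤ ε * |a| * ‖a - 0‖ := hmvt
    _ = ε * a ^ 2 := by rw [Real.norm_eq_abs, sub_zero, mul_assoc, ← abs_mul, abs_mul_self]; ring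

theorem heat_flow_first_derivative_at_zero
    (φ : ℝ → ℝ) (hφ : ContDiff ℝ (⊤ : ℕ∞) φ) (hsupp : HasCompactSupport φ)
    (K : ℝ → ℝ → ℝ)
    (hK : ∀ t x : ℝ, K t x =
      (Real.sqrt (4 * Real.pi * t))⁻¹ * Real.exp (-(x^2) / (4 * t))) :
    Filter.Tendsto (fun t : ℝ => ((∫ x : ℝ, K t x * φ x) - φ 0) / t)
      (nhdsWithin 0 (Set.Ioi 0)) (nhds ((deriv (deriv φ)) 0)) := by
  -- basic smoothness facts
  have hinf : ContDiff ℝ (⊤ : ℕ∞) φ := hφ.of_le (by simp)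
  have hφcont : Continuous φ := hφ.continuous
  obtain ⟨hdiff, hφ'⟩ := contDiff_infty_iff_deriv.mp hinf
  obtain ⟨hdiff2, hφ''⟩ := contDiff_infty_iff_deriv.mp hφ'
  have hdφ : ∀ x : ℝ, HasDerivAt φ (deriv φ x) x := fun x => (hdiff x).hasDerivAt
  have hdφ2 : ∀ x : ℝ, HasDerivAt (deriv φ) (deriv (deriv φ) x) x :=
    fun x => (hdiff2 x).hasDerivAt
  have hcont2 : Continuous (deriv (deriv φ)) := hφ''.continuous
  obtain ⟨C, hC⟩ := (hsupp.deriv.deriv).exists_bound_of_continuous hcont2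
  have hC' : ∀ x : ℝ, |deriv (deriv φ) x| ≤ C := fun x => by
    simpa [Real.norm_eq_abs] using hC x
  have hC0 : 0 ≤ C := le_trans (abs_nonneg _) (hC' 0)
  obtain ⟨Cφ, hCφ⟩ := hsupp.exists_bound_of_continuous hφcont
  set c1 := deriv φ 0 with hc1
  set c2 := deriv (deriv φ) 0 with hc2
  -- gaussian facts
  have hπ : (0:ℝ) < Real.sqrt Real.pi := Real.sqrt_pos.2 Real.pi_pos
  have hg1 : ∫ u : ℝ, Real.exp (-u^2) = Real.sqrt Real.pi := by
    simpa using integral_gaussian 1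
  have hkint : Integrable (fun u : ℝ => Real.exp (-u^2)) := by
    simpa using integrable_exp_neg_mul_sq (b := 1) one_pos
  have hxint : Integrable (fun u : ℝ => u * Real.exp (-u^2)) := by
    simpa using integrable_mul_exp_neg_mul_sq (b := 1) one_pos
  have hx2int : Integrable (fun u : ℝ => u^2 * Real.exp (-u^2)) := by
    have := integrable_rpow_mul_exp_neg_mul_sq (b := 1) one_pos (s := 2) (by norm_num)
    refine this.congr (Filter.Eventually.of_forall fun x => ?_)
    simp only [Real.rpow_natCast (n := 2)]
    norm_num
  -- the rescaled integrand
  set F : ℝ → ℝ → ℝ := fun t u => (Real.sqrt Real.pi)⁻¹ * Real.exp (-u^2) *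
    ((φ (Real.sqrt (4*t) * u) - φ 0 - c1 * (Real.sqrt (4*t) * u)) / t) with hF
  -- representation of the difference quotient for t > 0
  have rep : ∀ t : ℝ, t ∈ Set.Ioi (0:ℝ) →
      ((∫ x : ℝ, K t x * φ x) - φ 0) / t = ∫ u : ℝ, F t u := by
    intro t ht
    have ht0 : (0:ℝ) < t := ht
    set s := Real.sqrt (4*t) with hsdef
    have hs : 0 < s := Real.sqrt_pos.2 (by linarith)
    have hs2 : s^2 = 4*t := Real.sq_sqrt (by linarith)
    -- change of variables
    have hsqrt : Real.sqrt (4 * Real.pi * t) = Real.sqrt Real.pi * s := by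
      rw [hsdef, ← Real.sqrt_mul Real.pi_pos.le]
      congr 1; ring
    have hptwise : ∀ u : ℝ, K t (s*u) * φ (s*u)
        = s⁻¹ * ((Real.sqrt Real.pi)⁻¹ * Real.exp (-u^2) * φ (s*u)) := by
      intro u
      rw [hK, hsqrt]
      have : -((s*u)^2) / (4*t) = -u^2 := by
        rw [mul_pow, hs2]; field_simp
      rw [this, mul_inv]
      ring
    have hcv : ∫ u : ℝ, K t (s*u) * φ (s*u) = |s⁻¹| • ∫ x : ℝ, K t x * φ x :=
      MeasureTheory.Measure.integral_comp_mul_left (fun x => K t x * φ x) s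
    have step1 : ∫ x : ℝ, K t x * φ x
        = ∫ u : ℝ, (Real.sqrt Real.pi)⁻¹ * Real.exp (-u^2) * φ (s*u) := by
      have h2 : ∫ u : ℝ, K t (s*u) * φ (s*u)
          = s⁻¹ * ∫ u : ℝ, (Real.sqrt Real.pi)⁻¹ * Real.exp (-u^2) * φ (s*u) := by
        rw [← MeasureTheory.integral_const_mul]
        exact integral_congr_ae (Filter.Eventually.of_forall hptwise)
      rw [h2, abs_of_pos (inv_pos.2 hs), smul_eq_mul] at hcv
      have := mul_left_cancel₀ (inv_ne_zero hs.ne') hcv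
      linarith [this]
    -- integrability of the three pieces
    have iA : Integrable (fun u : ℝ => (Real.sqrt Real.pi)⁻¹ * Real.exp (-u^2) * φ (s*u)) := by
      have hb : Integrable (fun u : ℝ => (Real.sqrt Real.pi)⁻¹ * Real.exp (-u^2)) :=
        hkint.const_mul _
      have := hb.bdd_mul (f := fun u : ℝ => φ (s*u))
        ((hφcont.comp (continuous_const.mul continuous_id)).aestronglyMeasurable)
        (Filter.Eventually.of_forall fun u => hCφ (s*u))
      refine this.congr (Filter.Eventually.of_forall fun u => ?_)
      ring
    have iB : Integrable (fun u : ℝ => (Real.sqrt Real.pi)⁻¹ * Real.exp (-u^2) * φ 0) := by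
      refine ((hkint.const_mul ((Real.sqrt Real.pi)⁻¹ * φ 0)).congr
        (Filter.Eventually.of_forall fun u => ?_))
      ring
    have iC : Integrable (fun u : ℝ =>
        (Real.sqrt Real.pi)⁻¹ * Real.exp (-u^2) * (c1 * (s*u))) := by
      refine ((hxint.const_mul ((Real.sqrt Real.pi)⁻¹ * c1 * s)).congr
        (Filter.Eventually.of_forall fun u => ?_))
      ring
    -- values of the last two pieces
    have vB : ∫ u : ℝ, (Real.sqrt Real.pi)⁻¹ * Real.exp (-u^2) * φ 0 = φ 0 := by
      have : ∫ u : ℝ, (Real.sqrt Real.pi)⁻¹ * Real.exp (-u^2) * φ 0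
          = ((Real.sqrt Real.pi)⁻¹ * φ 0) * ∫ u : ℝ, Real.exp (-u^2) := by
        rw [← MeasureTheory.integral_const_mul]
        exact integral_congr_ae (Filter.Eventually.of_forall fun u => by ring)
      rw [this, hg1]
      field_simp
    have vC : ∫ u : ℝ, (Real.sqrt Real.pi)⁻¹ * Real.exp (-u^2) * (c1 * (s*u)) = 0 := by
      have : ∫ u : ℝ, (Real.sqrt Real.pi)⁻¹ * Real.exp (-u^2) * (c1 * (s*u))
          = ((Real.sqrt Real.pi)⁻¹ * c1 * s) * ∫ u : ℝ, u * Real.exp (-u^2) := by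
        rw [← MeasureTheory.integral_const_mul]
        exact integral_congr_ae (Filter.Eventually.of_forall fun u => by ring)
      rw [this, odd_int, mul_zero]
    -- put it together
    have split : ∫ u : ℝ, F t u
        = ((∫ u : ℝ, (Real.sqrt Real.pi)⁻¹ * Real.exp (-u^2) * φ (s*u))
          - (∫ u : ℝ, (Real.sqrt Real.pi)⁻¹ * Real.exp (-u^2) * φ 0)
          - (∫ u : ℝ, (Real.sqrt Real.pi)⁻¹ * Real.exp (-u^2) * (c1 * (s*u)))) / t := by
      have h1 : ∫ u : ℝ, F t u
          = (∫ u : ℝ, ((Real.sqrt Real.pi)⁻¹ * Real.exp (-u^2) * φ (s*u)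
            - (Real.sqrt Real.pi)⁻¹ * Real.exp (-u^2) * φ 0
            - (Real.sqrt Real.pi)⁻¹ * Real.exp (-u^2) * (c1 * (s*u)))) / t := by
        rw [← integral_div]
        exact integral_congr_ae (Filter.Eventually.of_forall fun u => by
          simp only [hF]
          ring)
      have iAB : Integrable (fun u : ℝ => (Real.sqrt Real.pi)⁻¹ * Real.exp (-u^2) * φ (s*u)
          - (Real.sqrt Real.pi)⁻¹ * Real.exp (-u^2) * φ 0) volume := iA.sub iB
      rw [h1, integral_sub iAB iC, integral_sub iA iB]
    rw [split, vB, vC, step1]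
    ring
  -- the limit integrand and its integral
  have hfint : ∫ u : ℝ, (Real.sqrt Real.pi)⁻¹ * Real.exp (-u^2) * (2*c2*u^2) = c2 := by
    have : ∫ u : ℝ, (Real.sqrt Real.pi)⁻¹ * Real.exp (-u^2) * (2*c2*u^2)
        = ((Real.sqrt Real.pi)⁻¹ * (2*c2)) * ∫ u : ℝ, u^2 * Real.exp (-u^2) := by
      rw [← MeasureTheory.integral_const_mul]
      exact integral_congr_ae (Filter.Eventually.of_forall fun u => by ring)
    rw [this, second_moment]
    field_simp
  -- reduce to the rescaled family
  have main : Filter.Tendsto (fun t : ℝ => ∫ u : ℝ, F t u)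
      (nhdsWithin 0 (Set.Ioi 0)) (nhds c2) := by
    rw [← hfint]
    apply MeasureTheory.tendsto_integral_filter_of_dominated_convergence
      (bound := fun u : ℝ => (Real.sqrt Real.pi)⁻¹ * Real.exp (-u^2) * (4*C*u^2))
    · -- measurability
      refine Filter.Eventually.of_forall fun t => ?_
      apply Continuous.aestronglyMeasurable
      refine (continuous_const.mul (Real.continuous_exp.comp (continuous_pow 2).neg)).mul ?_
      exact (((hφcont.comp (continuous_const.mul continuous_id)).sub continuous_const).sub
        (continuous_const.mul (continuous_const.mul continuous_id))).div_const t
    · -- domination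
      filter_upwards [self_mem_nhdsWithin] with t ht
      refine MeasureTheory.ae_of_all _ fun u => ?_
      have ht0 : (0:ℝ) < t := ht
      set s := Real.sqrt (4*t) with hsdef
      have hs2 : s^2 = 4*t := Real.sq_sqrt (by linarith)
      have ha2 : (s*u)^2 = 4*t*u^2 := by rw [mul_pow, hs2]
      have htay := taylor1 φ hdφ hdφ2 hC' (s*u)
      have he : (0:ℝ) < Real.exp (-u^2) := Real.exp_pos _
      rw [hF, Real.norm_eq_abs, abs_mul, abs_mul, abs_div,
        abs_of_pos ht0, abs_of_pos he, abs_of_nonneg (inv_nonneg.2 hπ.le)]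
      rw [mul_assoc, mul_assoc]
      gcongr
      rw [div_le_iff₀ ht0]
      calc |φ (s*u) - φ 0 - c1 * (s*u)| ≤ C * (s*u)^2 := htay
        _ = 4*C*u^2*t := by rw [ha2]; ring
    · -- integrability of the bound
      refine ((hx2int.const_mul ((Real.sqrt Real.pi)⁻¹ * (4*C))).congr
        (Filter.Eventually.of_forall fun u => ?_))
      ring
    · -- pointwise limit
      refine MeasureTheory.ae_of_all _ fun u => ?_
      set k := (Real.sqrt Real.pi)⁻¹ * Real.exp (-u^2) with hk
      -- the remainder tends to zero
      have hR : Filter.Tendsto (fun t : ℝ =>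
          (φ (Real.sqrt (4*t) * u) - φ 0 - c1 * (Real.sqrt (4*t) * u)
            - c2 * (Real.sqrt (4*t) * u)^2 / 2) / t)
          (nhdsWithin 0 (Set.Ioi 0)) (nhds 0) := by
        rw [Metric.tendsto_nhdsWithin_nhds]
        intro ε hε
        have hε' : 0 < ε / (4*u^2+1) := by positivity
        obtain ⟨δ, hδ, htaylor⟩ := taylor2 φ hdφ hdφ2 hε'
        refine ⟨δ^2/(4*u^2+1), by positivity, fun {t} ht hdist => ?_⟩
        have ht0 : (0:ℝ) < t := ht
        rw [Real.dist_eq, sub_zero, abs_of_pos ht0] at hdist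
        set s := Real.sqrt (4*t) with hsdef
        have hs2 : s^2 = 4*t := Real.sq_sqrt (by linarith)
        have ha2 : (s*u)^2 = 4*t*u^2 := by rw [mul_pow, hs2]
        rw [lt_div_iff₀ (by positivity : (0:ℝ) < 4*u^2+1)] at hdist
        have hasq : (s*u)^2 ≤ δ^2 := by
          rw [ha2]
          nlinarith [sq_nonneg u, sq_nonneg δ, mul_nonneg ht0.le (sq_nonneg u)]
        have haδ : |s*u| ≤ δ := by
          have h1 : Real.sqrt ((s*u)^2) ≤ Real.sqrt (δ^2) := Real.sqrt_le_sqrt hasq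
          rwa [Real.sqrt_sq_eq_abs, Real.sqrt_sq hδ.le] at h1
        have hnum := htaylor (s*u) haδ
        rw [Real.dist_eq, sub_zero, abs_div, abs_of_pos ht0, div_lt_iff₀ ht0]
        calc |φ (s*u) - φ 0 - c1 * (s*u) - c2 * (s*u)^2 / 2|
            ≤ ε/(4*u^2+1) * (s*u)^2 := hnum
          _ = ε/(4*u^2+1) * (4*t*u^2) := by rw [ha2]
          _ < ε * t := by
              rw [div_mul_eq_mul_div, div_lt_iff₀ (by positivity : (0:ℝ) < 4*u^2+1)]
              nlinarith [sq_nonneg u]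
      have := (hR.add (tendsto_const_nhds (x := 2*c2*u^2))).const_mul k
      rw [zero_add] at this
      refine this.congr' ?_
      filter_upwards [self_mem_nhdsWithin] with t ht
      have ht0 : (0:ℝ) < t := ht
      have hs2 : (Real.sqrt (4*t))^2 = 4*t := Real.sq_sqrt (by linarith)
      have ha2 : (Real.sqrt (4*t)*u)^2 = 4*t*u^2 := by rw [mul_pow, hs2]
      have hinner : (φ (Real.sqrt (4*t)*u) - φ 0 - c1*(Real.sqrt (4*t)*u)
            - c2*(Real.sqrt (4*t)*u)^2/2)/t + 2*c2*u^2
          = (φ (Real.sqrt (4*t)*u) - φ 0 - c1*(Real.sqrt (4*t)*u))/t := by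
        rw [ha2]
        field_simp
        ring
      rw [hF]
      simp only []
      rw [hinner]
  refine main.congr' ?_
  filter_upwards [self_mem_nhdsWithin] with t ht
  exact (rep t ht).symm
end
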